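/- arXiv:2210.08545 — 5 statements merged into one kernel-verified Lean document; each statement's English description precedes it below -/
import Mathlib

section
/- With ζ₀ = ζ₀(a) as in the D/M/1 model (μ fixed, aμ > 1), the derivative with respect to a of ζ₀/(1-ζ₀) equals -μ·ζ₀/((1-ζ₀)·(1 - a·μ·ζ₀)). -/
/-!
Differentiating the fixed-point equation `ζ₀ = exp (-a μ (1 - ζ₀))` gives
`ζ₀' (1 - a μ ζ₀) = -μ ζ₀ (1 - ζ₀)`, so implicit differentiation only needs `a μ ζ₀ ≠ 1`.
That holds for every fixed point `ζ₀ ≠ 1`: if `a μ ζ₀ = 1`, then `t = a μ (1 - ζ₀)` satisfies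
`exp t = t + 1`, forcing `t = 0` and hence `ζ₀ = 1`.
-/

open Real Filter Topology

theorem mul_ne_one_of_eq_exp_neg_mul_one_sub {c z : ℝ} (hz : z = exp (-c * (1 - z)))
    (hz1 : z ≠ 1) : c * z ≠ 1 := by
  intro hcz
  set t := c * (1 - z) with ht
  have hc : c = exp t := by
    calc c = c * (z * exp t) := by rw [hz, ← exp_add, ht, neg_mul, neg_add_cancel, exp_zero, mul_one]
      _ = exp t := by rw [← mul_assoc, hcz, one_mul]
  have ht_eq : t + 1 = exp t := by rw [← hc, ht]; linear_combination -hcz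
  have ht0 : t = 0 := by
    by_contra h
    exact (add_one_lt_exp h).ne ht_eq
  rw [ht0, exp_zero] at hc
  exact hz1 (by simpa [hc] using hcz)

theorem HasDerivAt.div_one_sub {z : ℝ → ℝ} {z' a : ℝ} (hz : HasDerivAt z z' a) (hz1 : z a ≠ 1) :
    HasDerivAt (fun b => z b / (1 - z b)) (z' / (1 - z a) ^ 2) a := by
  have hq : HasDerivAt (fun b => z b / (1 - z b))
      ((z' * (1 - z a) - z a * (0 - z')) / (1 - z a) ^ 2) a :=
    hz.div ((hasDerivAt_const a 1).sub hz) (sub_ne_zero.mpr hz1.symm)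
  convert hq using 2
  ring

theorem hasDerivAt_of_eventually_eq_exp_neg_mul_one_sub {z : ℝ → ℝ} {μ a : ℝ}
    (hdiff : DifferentiableAt ℝ z a)
    (hfe : ∀ᶠ b in 𝓝 a, z b = exp (-(b * μ) * (1 - z b))) (hne : a * μ * z a ≠ 1) :
    HasDerivAt z (-(μ * z a * (1 - z a)) / (1 - a * μ * z a)) a := by
  set z' := deriv z a
  have hz : HasDerivAt z z' a := hdiff.hasDerivAt
  have hrhs : HasDerivAt (fun b => exp (-(b * μ) * (1 - z b)))
      (exp (-(a * μ) * (1 - z a)) * (-(1 * μ) * (1 - z a) + -(a * μ) * (0 - z'))) a :=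
    ((((hasDerivAt_id a).mul_const μ).neg).mul ((hasDerivAt_const a 1).sub hz)).exp
  have hz'_eq := hz.unique (hrhs.congr_of_eventuallyEq hfe)
  rw [← hfe.self_of_nhds] at hz'_eq
  convert hz using 1
  rw [div_eq_iff (sub_ne_zero.mpr hne.symm)]
  linear_combination -hz'_eq

theorem stmt5_general (μ : ℝ) (z : ℝ → ℝ)
    (hz : ∀ a ∈ Set.Ioi (1/μ), z a ∈ Set.Ioo (0:ℝ) 1)
    (hfe : ∀ a ∈ Set.Ioi (1/μ), z a = Real.exp (-(a * μ) * (1 - z a)))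
    (a : ℝ) (ha : a ∈ Set.Ioi (1/μ))
    (hdiff : DifferentiableAt ℝ z a) :
    deriv (fun a => z a / (1 - z a)) a
      = -(μ * z a) / ((1 - z a) * (1 - a * μ * z a)) := by
  have hz1 : z a ≠ 1 := (hz a ha).2.ne
  have hne : a * μ * z a ≠ 1 := mul_ne_one_of_eq_exp_neg_mul_one_sub (hfe a ha) hz1
  have hfe_nhds : ∀ᶠ b in 𝓝 a, z b = exp (-(b * μ) * (1 - z b)) :=
    eventually_of_mem (isOpen_Ioi.mem_nhds ha) hfe
  rw [((hasDerivAt_of_eventually_eq_exp_neg_mul_one_sub hdiff hfe_nhds hne).div_one_sub hz1).deriv]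
  have h1 : 1 - z a ≠ 0 := sub_ne_zero.mpr hz1.symm
  have h2 : 1 - a * μ * z a ≠ 0 := sub_ne_zero.mpr hne.symm
  field_simp

/-- With `ζ₀ = z a` as in the D/M/1 model (`μ` fixed, `a*μ > 1`), the derivative with
respect to `a` of `z a / (1 - z a)` equals `-μ * z a / ((1 - z a) * (1 - a*μ*(z a)))`. -/
theorem stmt5 (μ : ℝ) (hμ : 0 < μ) (z : ℝ → ℝ)
    (hz : ∀ a ∈ Set.Ioi (1/μ), z a ∈ Set.Ioo (0:ℝ) 1)
    (hfe : ∀ a ∈ Set.Ioi (1/μ), z a = Real.exp (-(a * μ) * (1 - z a)))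
    (a : ℝ) (ha : a ∈ Set.Ioi (1/μ))
    (hdiff : DifferentiableAt ℝ z a) :
    deriv (fun a => z a / (1 - z a)) a
      = -(μ * z a) / ((1 - z a) * (1 - a * μ * z a)) :=
  stmt5_general μ z hz hfe a ha hdiff
end

section
/- For each c ∈ (0,1), the equation (1 - z + z·ln z)/z = c/(1-c) has exactly one solution z ∈ (0,1), and it is given by z = -1/ω₋(-exp(-1/(1-c))), where ω₋ is the lower real branch of the Lambert W function (satisfying ω₋(s)e^{ω₋(s)} = s and ω₋(x) ≤ -1 on [-1/e, 0)). -/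
/-!
Dividing by `z`, the equation reads `G z = t` with `G z = z⁻¹ - 1 + log z` and `t = c/(1-c) > 0`.
The derivative `(z - 1)/z²` of `G` is negative on `(0,1)`, and `G 1 = 0 < t < G (exp (-(1+t)))`,
so the intermediate value theorem gives exactly one solution. For a solution, `w = -z⁻¹ ≤ -1`
satisfies `w e^w = -exp (-(z⁻¹ + log z)) = -exp (-1/(1-c))`, and `w e^w` is strictly decreasing
on `(-∞, -1]`.
-/

open Real Set

lemma one_sub_add_mul_log_div {z : ℝ} (hz : z ≠ 0) :
    (1 - z + z * log z) / z = z⁻¹ - 1 + log z := by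
  field_simp

lemma hasDerivAt_inv_sub_one_add_log {x : ℝ} (hx : x ≠ 0) :
    HasDerivAt (fun z => z⁻¹ - 1 + log z) (-(x ^ 2)⁻¹ + x⁻¹) x :=
  ((hasDerivAt_inv hx).sub_const 1).add (hasDerivAt_log hx)

lemma continuousOn_inv_sub_one_add_log :
    ContinuousOn (fun z : ℝ => z⁻¹ - 1 + log z) (Ioi 0) := fun _ hx =>
  (hasDerivAt_inv_sub_one_add_log (ne_of_gt hx)).continuousAt.continuousWithinAt

lemma strictAntiOn_inv_sub_one_add_log :
    StrictAntiOn (fun z : ℝ => z⁻¹ - 1 + log z) (Ioc 0 1) := by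
  refine strictAntiOn_of_deriv_neg (convex_Ioc 0 1)
    (continuousOn_inv_sub_one_add_log.mono Ioc_subset_Ioi_self) fun x hx => ?_
  rw [interior_Ioc] at hx
  rw [(hasDerivAt_inv_sub_one_add_log hx.1.ne').deriv]
  have : x⁻¹ < (x ^ 2)⁻¹ := inv_strictAnti₀ (pow_pos hx.1 2) (by nlinarith [hx.1, hx.2])
  linarith

lemma lt_inv_sub_one_add_log_exp {t : ℝ} (ht : 0 < t) :
    t < (exp (-(1 + t)))⁻¹ - 1 + log (exp (-(1 + t))) := by
  rw [← exp_neg, neg_neg, log_exp]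
  have hexp : 2 * (1 + t) < exp (1 + t) := by
    rw [exp_add]
    nlinarith [exp_one_gt_d9, add_one_le_exp t]
  linarith

lemma exists_mem_Ioo_inv_sub_one_add_log_eq {t : ℝ} (ht : 0 < t) :
    ∃ z ∈ Ioo (0 : ℝ) 1, z⁻¹ - 1 + log z = t := by
  set a := exp (-(1 + t))
  have ha0 : 0 < a := exp_pos _
  have ha1 : a < 1 := exp_lt_one_iff.mpr (by linarith)
  have hcont : ContinuousOn (fun z : ℝ => z⁻¹ - 1 + log z) (Icc a 1) :=
    continuousOn_inv_sub_one_add_log.mono fun z hz => ha0.trans_le hz.1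
  have hmem : t ∈ Ioo ((1 : ℝ)⁻¹ - 1 + log 1) (a⁻¹ - 1 + log a) :=
    ⟨by simpa using ht, lt_inv_sub_one_add_log_exp ht⟩
  obtain ⟨z, hz, hGz⟩ := intermediate_value_Ioo' ha1.le hcont hmem
  exact ⟨z, ⟨ha0.trans hz.1, hz.2⟩, hGz⟩

lemma strictAntiOn_mul_exp : StrictAntiOn (fun w : ℝ => w * exp w) (Iic (-1)) := by
  refine strictAntiOn_of_deriv_neg (convex_Iic (-1)) (by fun_prop) fun x hx => ?_
  rw [interior_Iic] at hx
  have hd : HasDerivAt (fun w => w * exp w) (1 * exp x + x * exp x) x :=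
    (hasDerivAt_id x).mul (hasDerivAt_exp x)
  rw [hd.deriv]
  nlinarith [exp_pos x, hx.out]

lemma neg_inv_mul_exp_neg_inv {z : ℝ} (hz : 0 < z) :
    -z⁻¹ * exp (-z⁻¹) = -exp (-(z⁻¹ + log z)) := by
  rw [neg_add, exp_add, exp_neg (log z), exp_log hz]
  field_simp

lemma eq_neg_inv_of_mul_exp_eq {z w : ℝ} (hz : z ∈ Ioc (0 : ℝ) 1) (hw : w ≤ -1)
    (h : w * exp w = -exp (-(z⁻¹ + log z))) : w = -z⁻¹ := by
  have hz_inv : -z⁻¹ ≤ -1 := neg_le_neg (one_le_inv₀ hz.1 |>.mpr hz.2)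
  exact strictAntiOn_mul_exp.injOn hw hz_inv (by rw [h, neg_inv_mul_exp_neg_inv hz.1])

/-- For each `c ∈ (0,1)`, the equation `(1 - z + z*ln z)/z = c/(1-c)` has exactly one
solution `z ∈ (0,1)`, and any such solution equals `-1/ω₋(-exp (-1/(1-c)))`, where `ω₋`
is the lower real branch of the Lambert W function, encoded as any real `w ≤ -1` with
`w * e^w = -exp (-1/(1-c))`. -/
theorem stmt8 (c : ℝ) (hc : c ∈ Set.Ioo (0:ℝ) 1) :
    (∃! z : ℝ, z ∈ Set.Ioo (0:ℝ) 1 ∧ (1 - z + z * Real.log z) / z = c / (1 - c)) ∧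
    (∀ z ∈ Set.Ioo (0:ℝ) 1, (1 - z + z * Real.log z) / z = c / (1 - c) →
      ∀ w : ℝ, w ≤ -1 → w * Real.exp w = -Real.exp (-(1/(1 - c))) → z = -1 / w) := by
  have h1c : 0 < 1 - c := sub_pos.mpr hc.2
  refine ⟨?_, fun z hz heq w hw hwe => ?_⟩
  · obtain ⟨z, hz, hGz⟩ := exists_mem_Ioo_inv_sub_one_add_log_eq (div_pos hc.1 h1c)
    refine ⟨z, ⟨hz, (one_sub_add_mul_log_div hz.1.ne').trans hGz⟩, fun y ⟨hy, hyeq⟩ => ?_⟩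
    refine strictAntiOn_inv_sub_one_add_log.injOn (Ioo_subset_Ioc_self hy)
      (Ioo_subset_Ioc_self hz) ?_
    rw [← one_sub_add_mul_log_div hy.1.ne', hyeq, hGz]
  · rw [one_sub_add_mul_log_div hz.1.ne'] at heq
    have hsum : z⁻¹ + log z = 1 / (1 - c) := by
      rw [show 1 / (1 - c) = c / (1 - c) + 1 by field_simp; ring]
      linarith
    rw [← hsum] at hwe
    rw [eq_neg_inv_of_mul_exp_eq (Ioo_subset_Ioc_self hz) hw hwe]
    field_simp
end

section
/- Let μ > 0, a > 0, and ζ₀ = exp(-aμ(1-ζ₀)) ∈ (0,1). Define f on (0,∞) piecewise by f(x) = μ^{k+1}·ζ₀·x^{k-1}·(x - k·a)·e^{-μx}/k! for x ∈ (k·a, (k+1)·a), k = 0, 1, 2, ... (with the convention x^{-1}·(x-0) = 1 for k = 0). Then ∫₀^∞ f(x) dx = ζ₀. -/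
/-!
Substituting `y = μ x` and writing `c = a μ`, the density becomes `μ ζ₀ h(y)` with
`h = P_k - c P_{k-1}` on `[k c, (k+1) c)`, where `P_j(y) = e^{-y} y^j / j!` are the Poisson
weights. Since `d/dy ∑_{j ≤ n} P_j = -P_n`, the piece `k` integrates to `R_k - R_{k+1}` with
`R_k = ∑_{j ≤ k} P_j(k c) - c ∑_{j < k} P_j(k c)`; the junction identity
`P_{k+1}((k+1)c) = c P_k((k+1)c)` makes this telescope to `∫₀^{nc} h = 1 - R_n`.
The fixed-point equation with `ζ₀ < 1` forces `c > 1`, and then the Chernoff bound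
`∑_{j ≤ n} P_j(n c) ≤ (c e^{1-c})^n` shows `R_n → 0`.
-/

open MeasureTheory Real Set Filter Topology
open scoped Nat

noncomputable section

def poissonTerm (y : ℝ) (n : ℕ) : ℝ := exp (-y) * y ^ n / n !

def poissonSum (y : ℝ) (n : ℕ) : ℝ := ∑ j ∈ Finset.range n, poissonTerm y j

lemma poissonTerm_nonneg {y : ℝ} (hy : 0 ≤ y) (n : ℕ) : 0 ≤ poissonTerm y n := by
  unfold poissonTerm; positivity

lemma poissonTerm_succ (y : ℝ) (n : ℕ) :
    poissonTerm y (n + 1) = y / (n + 1) * poissonTerm y n := by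
  simp only [poissonTerm, Nat.factorial_succ, pow_succ]
  push_cast
  field_simp

lemma hasDerivAt_poissonTerm_succ (y : ℝ) (n : ℕ) :
    HasDerivAt (poissonTerm · (n + 1)) (poissonTerm y n - poissonTerm y (n + 1)) y := by
  refine (((hasDerivAt_neg y).exp.fun_mul (hasDerivAt_pow (n + 1) y)).div_const
    ((n + 1)! : ℝ)).congr_deriv ?_
  rw [poissonTerm_succ]
  simp only [poissonTerm, Nat.factorial_succ]
  push_cast
  field_simp
  ring

lemma poissonSum_succ (y : ℝ) (n : ℕ) :
    poissonSum y (n + 1) = poissonSum y n + poissonTerm y n :=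
  Finset.sum_range_succ _ _

lemma poissonSum_nonneg {y : ℝ} (hy : 0 ≤ y) (n : ℕ) : 0 ≤ poissonSum y n :=
  Finset.sum_nonneg fun j _ => poissonTerm_nonneg hy j

lemma poissonSum_le_succ {y : ℝ} (hy : 0 ≤ y) (n : ℕ) :
    poissonSum y n ≤ poissonSum y (n + 1) := by
  rw [poissonSum_succ]
  linarith [poissonTerm_nonneg hy n]

lemma hasDerivAt_poissonSum_succ (y : ℝ) (n : ℕ) :
    HasDerivAt (poissonSum · (n + 1)) (-poissonTerm y n) y := by
  induction n with
  | zero => simpa [poissonSum, poissonTerm] using (hasDerivAt_neg y).exp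
  | succ n ih =>
    simp only [poissonSum_succ _ (n + 1)]
    exact (ih.fun_add (hasDerivAt_poissonTerm_succ y n)).congr_deriv (by ring)

lemma poissonSum_succ_le_exp_div_pow {t y : ℝ} (ht : 0 < t) (ht1 : t ≤ 1) (hy : 0 ≤ y)
    (n : ℕ) :
    poissonSum y (n + 1) ≤ exp (-(1 - t) * y) / t ^ n := by
  calc poissonSum y (n + 1)
      ≤ ∑ j ∈ Finset.range (n + 1), exp (-y) / t ^ n * ((t * y) ^ j / j !) := by
        refine Finset.sum_le_sum fun j hj => ?_
        have htj : t ^ n ≤ t ^ j :=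
          pow_le_pow_of_le_one ht.le ht1 (Nat.lt_succ_iff.mp (Finset.mem_range.mp hj))
        rw [poissonTerm, mul_pow,
          show exp (-y) * y ^ j / j ! = exp (-y) / t ^ n * (t ^ n * y ^ j / j !) by field_simp]
        gcongr
    _ = exp (-y) / t ^ n * ∑ j ∈ Finset.range (n + 1), (t * y) ^ j / j ! := by
        rw [Finset.mul_sum]
    _ ≤ exp (-y) / t ^ n * exp (t * y) := by
        gcongr
        exact sum_le_exp_of_nonneg (by positivity) _
    _ = exp (-(1 - t) * y) / t ^ n := by
        rw [div_mul_eq_mul_div, ← exp_add]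
        congr 2
        ring

lemma mul_exp_one_sub_lt_one {c : ℝ} (hc : c ≠ 1) : c * exp (1 - c) < 1 := by
  have h : c < exp (c - 1) := by linarith [add_one_lt_exp (sub_ne_zero.mpr hc)]
  calc c * exp (1 - c) < exp (c - 1) * exp (1 - c) := by gcongr
    _ = 1 := by rw [← exp_add]; simp

lemma tendsto_poissonSum_mul_self {c : ℝ} (hc : 1 < c) :
    Tendsto (fun n : ℕ => poissonSum (n * c) (n + 1)) atTop (𝓝 0) := by
  have hc0 : 0 < c := by linarith
  refine squeeze_zero (fun n => poissonSum_nonneg (by positivity) _) (fun n => ?_)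
    (tendsto_pow_atTop_nhds_zero_of_lt_one (by positivity) (mul_exp_one_sub_lt_one hc.ne'))
  calc poissonSum (n * c) (n + 1) ≤ exp (-(1 - c⁻¹) * (n * c)) / c⁻¹ ^ n :=
        poissonSum_succ_le_exp_div_pow (inv_pos.2 hc0) (inv_le_one_of_one_le₀ hc.le)
          (by positivity) n
    _ = (c * exp (1 - c)) ^ n := by
        rw [mul_pow, ← exp_nat_mul, inv_pow, div_inv_eq_mul, mul_comm]
        congr 2
        field_simp
        ring

def lifoPiece (c : ℝ) : ℕ → ℝ → ℝ
  | 0, y => poissonTerm y 0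
  | k + 1, y => poissonTerm y (k + 1) - c * poissonTerm y k

/-- The waiting-time density of the theorem in the variable `y = μ x`, divided by `μ ζ₀`,
with `c = a μ`. -/
def lifoDensity (c y : ℝ) : ℝ := lifoPiece c ⌊y / c⌋₊ y

/-- For `y ∈ [k c, (k+1) c]` this is `1 - ∫₀^y lifoDensity c`. -/
def lifoTail (c : ℝ) (k : ℕ) (y : ℝ) : ℝ := poissonSum y (k + 1) - c * poissonSum y k

lemma continuous_lifoPiece (c : ℝ) (k : ℕ) : Continuous (lifoPiece c k) := by
  show Continuous fun y => lifoPiece c k y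
  cases k <;> simp only [lifoPiece, poissonTerm] <;> fun_prop

lemma lifoPiece_nonneg {c y : ℝ} {k : ℕ} (hc : 0 ≤ c) (hy : k * c ≤ y) :
    0 ≤ lifoPiece c k y := by
  have hy0 : 0 ≤ y := (by positivity : (0 : ℝ) ≤ k * c).trans hy
  cases k with
  | zero => exact poissonTerm_nonneg hy0 0
  | succ k =>
    rw [lifoPiece, poissonTerm_succ, ← sub_mul]
    refine mul_nonneg ?_ (poissonTerm_nonneg hy0 k)
    rw [sub_nonneg, le_div_iff₀ (by positivity)]
    push_cast at hy
    linarith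

lemma lifoDensity_nonneg {c y : ℝ} (hc : 0 < c) (hy : 0 ≤ y) : 0 ≤ lifoDensity c y :=
  lifoPiece_nonneg hc.le <| (le_div_iff₀ hc).mp (Nat.floor_le (div_nonneg hy hc.le))

lemma lifoDensity_eq_lifoPiece {c y : ℝ} {k : ℕ} (hc : 0 < c)
    (hy : y ∈ Ico (k * c) ((k + 1) * c)) :
    lifoDensity c y = lifoPiece c k y := by
  have hk : ⌊y / c⌋₊ = k := by
    rw [Nat.floor_eq_iff (div_nonneg ((by positivity : (0 : ℝ) ≤ k * c).trans hy.1) hc.le),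
      le_div_iff₀ hc, div_lt_iff₀ hc]
    exact hy
  rw [lifoDensity, hk]

lemma hasDerivAt_lifoTail (c : ℝ) (k : ℕ) (y : ℝ) :
    HasDerivAt (lifoTail c k) (-lifoPiece c k y) y := by
  cases k with
  | zero =>
    have h : lifoTail c 0 = (poissonSum · 1) := funext fun y => by simp [lifoTail, poissonSum]
    exact h ▸ hasDerivAt_poissonSum_succ y 0
  | succ k =>
    exact ((hasDerivAt_poissonSum_succ y (k + 1)).fun_sub
      ((hasDerivAt_poissonSum_succ y k).const_mul c)).congr_deriv (by rw [lifoPiece]; ring)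

lemma lifoTail_succ_mul_self (c : ℝ) (k : ℕ) :
    lifoTail c (k + 1) ((k + 1) * c) = lifoTail c k ((k + 1) * c) := by
  have hk : ((k : ℝ) + 1) ≠ 0 := by positivity
  simp only [lifoTail, poissonSum_succ _ (k + 1), poissonSum_succ _ k, poissonTerm_succ]
  field_simp
  ring

lemma integral_lifoPiece (c : ℝ) (k : ℕ) :
    ∫ y in k * c..(k + 1) * c, lifoPiece c k y
      = lifoTail c k (k * c) - lifoTail c (k + 1) ((k + 1) * c) := by
  rw [lifoTail_succ_mul_self, intervalIntegral.integral_eq_sub_of_hasDerivAt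
    (f := fun y => -lifoTail c k y)
    (fun y _ => (hasDerivAt_lifoTail c k y).neg.congr_deriv (neg_neg _))
    ((continuous_lifoPiece c k).intervalIntegrable _ _)]
  ring

lemma tendsto_lifoTail_mul_self {c : ℝ} (hc : 1 < c) :
    Tendsto (fun n : ℕ => lifoTail c n (n * c)) atTop (𝓝 0) := by
  have hc0 : 0 < c := by linarith
  have h := tendsto_poissonSum_mul_self hc
  refine tendsto_of_tendsto_of_tendsto_of_le_of_le (by simpa using h.const_mul (-c)) h
    (fun n => ?_) (fun n => ?_)
  all_goals
    have hy : (0 : ℝ) ≤ n * c := by positivity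
    have := poissonSum_nonneg hy n
    have := poissonSum_le_succ hy n
    simp only [lifoTail]
    nlinarith

lemma hasSum_integral_lifoDensity_Ico {c : ℝ} (hc : 1 < c) :
    HasSum (fun k : ℕ => ∫ y in Ico (k * c) ((k + 1) * c), lifoDensity c y) 1 := by
  have hc0 : 0 < c := by linarith
  have hpiece (k : ℕ) : ∫ y in Ico (k * c) ((k + 1) * c), lifoDensity c y
      = lifoTail c k (k * c) - lifoTail c (k + 1 : ℕ) ((k + 1 : ℕ) * c) := by
    rw [setIntegral_congr_fun measurableSet_Ico fun y hy => lifoDensity_eq_lifoPiece hc0 hy,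
      integral_Ico_eq_integral_Ioc, ← intervalIntegral.integral_of_le (by nlinarith),
      integral_lifoPiece]
    push_cast
    rfl
  have hnonneg (k : ℕ) : 0 ≤ ∫ y in Ico (k * c) ((k + 1) * c), lifoDensity c y :=
    setIntegral_nonneg measurableSet_Ico fun y hy =>
      lifoDensity_nonneg hc0 ((by positivity : (0 : ℝ) ≤ k * c).trans hy.1)
  rw [hasSum_iff_tendsto_nat_of_nonneg hnonneg]
  simp_rw [hpiece, Finset.sum_range_sub']
  simpa [lifoTail, poissonSum, poissonTerm] using
    (tendsto_lifoTail_mul_self hc).const_sub (lifoTail c 0 (0 * c))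

theorem integral_lifoDensity {c : ℝ} (hc : 1 < c) : ∫ y in Ioi 0, lifoDensity c y = 1 := by
  have hc0 : 0 < c := by linarith
  set s : ℕ → Set ℝ := fun k => Ico (k * c) ((k + 1) * c) with hs
  have hmono : Monotone fun k : ℕ => (k : ℝ) * c := fun i j h =>
    mul_le_mul_of_nonneg_right (Nat.cast_le.mpr h) hc0.le
  have hunion : ⋃ k, s k = Ici 0 := by
    simpa using iUnion_Ico_map_succ_eq_Ici (f := fun k : ℕ => (k : ℝ) * c)
      (fun k => hmono bot_le)
      (not_bddAbove_of_tendsto_atTop (tendsto_natCast_atTop_atTop.atTop_mul_const hc0))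
  have hdisj : Pairwise (Function.onFun Disjoint s) := by
    simpa [hs] using hmono.pairwise_disjoint_on_Ico_succ
  have hsum : HasSum (fun k => ∫ y in s k, lifoDensity c y) 1 := by
    simpa [hs] using hasSum_integral_lifoDensity_Ico hc
  have hint (k : ℕ) : IntegrableOn (lifoDensity c) (s k) :=
    ((continuous_lifoPiece c k).integrableOn_Icc.mono_set Ico_subset_Icc_self).congr_fun
      (fun y hy => (lifoDensity_eq_lifoPiece hc0 (by simpa [hs] using hy)).symm)
      measurableSet_Ico
  have hnorm (k : ℕ) : ∫ y in s k, ‖lifoDensity c y‖ = ∫ y in s k, lifoDensity c y :=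
    setIntegral_congr_fun measurableSet_Ico fun y hy =>
      norm_of_nonneg (lifoDensity_nonneg hc0 ((by positivity : (0 : ℝ) ≤ k * c).trans hy.1))
  have hintU : IntegrableOn (lifoDensity c) (⋃ k, s k) :=
    integrableOn_iUnion_of_summable_integral_norm hint (by simpa only [hnorm] using hsum.summable)
  rw [← integral_Ici_eq_integral_Ioi, ← hunion]
  exact (hasSum_integral_iUnion (fun _ => measurableSet_Ico) hdisj hintU).unique hsum

lemma one_lt_of_eq_exp_neg_mul {c ζ : ℝ} (hζ : ζ < 1) (h : ζ = exp (-c * (1 - ζ))) :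
    1 < c := by
  have hlt : exp (-c * (1 - ζ)) < exp (-(1 - ζ)) := by
    rw [← h]
    linarith [add_one_lt_exp (x := -(1 - ζ)) (by linarith)]
  nlinarith [exp_lt_exp.mp hlt]

lemma mul_lifoPiece_mul_eq {a μ x : ℝ} {k : ℕ} (hk : k ≠ 0) :
    μ * lifoPiece (a * μ) k (μ * x)
      = μ ^ (k + 1) * x ^ (k - 1) * (x - k * a) * exp (-μ * x) / k ! := by
  obtain ⟨m, rfl⟩ := Nat.exists_eq_succ_of_ne_zero hk
  simp only [lifoPiece, poissonTerm, Nat.factorial_succ, Nat.succ_sub_one, Nat.succ_eq_add_one]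
  push_cast
  field_simp
  ring

end

theorem stmt12_general (a μ ζ₀ : ℝ) (hμ : 0 < μ)
    (hz : ζ₀ ∈ Set.Ioo (0:ℝ) 1)
    (hfe : ζ₀ = Real.exp (-(a * μ) * (1 - ζ₀))) :
    let f : ℝ → ℝ := fun x =>
      let k : ℕ := ⌊x / a⌋₊
      if k = 0 then μ * ζ₀ * Real.exp (-μ * x)
      else μ^(k+1) * ζ₀ * x^(k-1) * (x - k * a) * Real.exp (-μ * x) / (Nat.factorial k)
    (∫ x in Set.Ioi (0:ℝ), f x) = ζ₀ := by
  intro f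
  have hf (x : ℝ) : f x = ζ₀ * μ * lifoDensity (a * μ) (μ * x) := by
    have hk : ⌊μ * x / (a * μ)⌋₊ = ⌊x / a⌋₊ := by
      rw [mul_comm a, mul_div_mul_left _ _ hμ.ne']
    simp only [f, lifoDensity, hk]
    split_ifs with h0
    · simp only [h0, lifoPiece, poissonTerm, pow_zero, Nat.factorial_zero, Nat.cast_one, div_one,
        mul_one, neg_mul]
      ring
    · rw [mul_assoc ζ₀ μ, mul_lifoPiece_mul_eq h0]
      ring
  simp_rw [hf]
  rw [integral_const_mul, integral_comp_mul_left_Ioi _ _ hμ, mul_zero, smul_eq_mul,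
    integral_lifoDensity (one_lt_of_eq_exp_neg_mul hz.2 hfe)]
  field_simp

/-- The absolutely continuous part of the D/M/1-LIFO equilibrium waiting-time density,
`f x = μ^(k+1) * ζ₀ * x^(k-1) * (x - k*a) * exp (-μ*x) / k!` on `(k*a, (k+1)*a)`
(with `k = ⌊x/a⌋` and the convention `x⁻¹*(x-0) = 1` for `k = 0`),
integrates to `ζ₀` over `(0,∞)`. -/
theorem stmt12 (a μ ζ₀ : ℝ) (ha : 0 < a) (hμ : 0 < μ)
    (hz : ζ₀ ∈ Set.Ioo (0:ℝ) 1)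
    (hfe : ζ₀ = Real.exp (-(a * μ) * (1 - ζ₀))) :
    let f : ℝ → ℝ := fun x =>
      let k : ℕ := ⌊x / a⌋₊
      if k = 0 then μ * ζ₀ * Real.exp (-μ * x)
      else μ^(k+1) * ζ₀ * x^(k-1) * (x - k * a) * Real.exp (-μ * x) / (Nat.factorial k)
    (∫ x in Set.Ioi (0:ℝ), f x) = ζ₀ :=
  stmt12_general a μ ζ₀ hμ hz hfe
end

section
/- For m = aμ > 1, Σ_{k=1}^∞ e^{-km}·(km)^{k-1}/k! = -ω(-m·e^{-m})/m = ζ₀, where ω is the principal Lambert W branch and ζ₀ ∈ (0,1) solves ζ₀ = e^{-m(1-ζ₀)}. -/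
open Finset

noncomputable def cB : ℕ → ℝ := fun n => if n = 0 then 0 else (n:ℝ)^(n-1) / n.factorial

lemma cB_nonneg (n : ℕ) : 0 ≤ cB n := by
  unfold cB; split <;> positivity

lemma cB_le (n : ℕ) : cB n ≤ Real.exp 1 ^ n := by
  unfold cB
  split
  · positivity
  · rename_i h
    have hn : 1 ≤ n := Nat.one_le_iff_ne_zero.mpr h
    have h1 : (n:ℝ)^(n-1) ≤ (n:ℝ)^n := by
      apply pow_le_pow_right₀ (by exact_mod_cast hn) (by omega)
    have h2 : (n:ℝ)^n / n.factorial ≤ Real.exp n :=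
      Real.pow_div_factorial_le_exp (n:ℝ) (Nat.cast_nonneg n) n
    have h3 : Real.exp (n:ℝ) = Real.exp 1 ^ n := by
      rw [← Real.exp_nat_mul]; norm_num
    calc (n:ℝ)^(n-1) / n.factorial ≤ (n:ℝ)^n / n.factorial :=
          (div_le_div_iff_of_pos_right (by positivity)).mpr h1
      _ ≤ Real.exp 1 ^ n := h3 ▸ h2

lemma real_exp_tsum (y : ℝ) : Real.exp y = ∑' n : ℕ, y^n / n.factorial := by
  rw [Real.exp_eq_exp_ℝ, NormedSpace.exp_eq_tsum_div]

lemma altS (n : ℕ) : ∀ d, d < n → ∑ k ∈ Finset.range (n+1), (-1:ℝ)^k * (n.choose k) * (k:ℝ)^d = 0 := by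
  induction n with
  | zero => intro d hd; omega
  | succ m ih =>
    intro d hd
    match d with
    | 0 =>
      have h := add_pow (-1 : ℝ) 1 (m+1)
      simp only [neg_add_cancel, one_pow, mul_one, zero_pow (Nat.succ_ne_zero m)] at h
      simpa [mul_comm] using h.symm
    | e+1 =>
      have he : e < m := by omega
      rw [Finset.sum_range_succ']
      simp only [pow_zero, Nat.cast_zero, zero_pow (Nat.succ_ne_zero e), mul_zero, add_zero]
      have key : ∀ j ∈ Finset.range (m+1),
          (-1:ℝ)^(j+1) * ((m+1).choose (j+1)) * (((j:ℕ)+1:ℕ):ℝ)^(e+1)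
          = ∑ i ∈ Finset.range (e+1), -((m:ℝ)+1) * (e.choose i) * ((-1:ℝ)^j * (m.choose j) * (j:ℝ)^i) := by
        intro j hj
        have hc : (((m+1).choose (j+1) : ℝ)) * ((j:ℝ)+1) = ((m:ℝ)+1) * m.choose j := by
          have h := (Nat.add_one_mul_choose_eq m j).symm
          have h2 : ((m+1).choose (j+1) * (j+1) : ℕ) = (m+1) * m.choose j := by
            simpa [Nat.succ_eq_add_one] using h
          exact_mod_cast h2
        have hb : ((j:ℝ)+1)^e = ∑ i ∈ Finset.range (e+1), (j:ℝ)^i * (e.choose i) := by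
          simpa using add_pow (j:ℝ) 1 e
        have hsplit : (((j:ℕ)+1:ℕ):ℝ)^(e+1) = ((j:ℝ)+1)^e * ((j:ℝ)+1) := by push_cast; ring
        rw [hsplit, hb, Finset.sum_mul, Finset.mul_sum]
        refine Finset.sum_congr rfl fun i _ => ?_
        rw [pow_succ]
        linear_combination (-(-1:ℝ)^j * (j:ℝ)^i * (e.choose i)) * hc
      rw [Finset.sum_congr rfl key, Finset.sum_comm]
      refine Finset.sum_eq_zero fun i hi => ?_
      have hi' : i < m := by have := Finset.mem_range.mp hi; omega
      rw [← Finset.mul_sum]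
      rw [show ∑ j ∈ Finset.range (m+1), ((-1:ℝ)^j * (m.choose j) * (j:ℝ)^i) = 0 from ih i hi', mul_zero]

lemma termEq (x : ℝ) (n k j : ℕ) (hn : 2 ≤ n) (h : k + j = n) :
    cB k * x^k * (-(k:ℝ)*x)^j / j.factorial
      = x^n / n.factorial * ((-1:ℝ)^j * (n.choose k) * (k:ℝ)^(n-1)) := by
  match k with
  | 0 =>
    have h0 : ((0:ℕ):ℝ) ^ (n-1) = 0 := by
      rw [Nat.cast_zero]; exact zero_pow (by omega)
    rw [h0]
    simp [cB]
  | t+1 =>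
    have hn' : n = t+1+j := by omega
    subst hn'
    have hfact : (((t+1+j).choose (t+1) : ℝ)) * (t+1).factorial * j.factorial
        = (t+1+j).factorial := by
      have := Nat.choose_mul_factorial_mul_factorial (show t+1 ≤ t+1+j by omega)
      rw [Nat.add_sub_cancel_left] at this
      exact_mod_cast this
    have h1 : (t+1+j) - 1 = t + j := by omega
    rw [h1]
    simp only [cB, if_neg (Nat.succ_ne_zero t)]
    have hne1 : ((t+1).factorial : ℝ) ≠ 0 := by positivity
    have hne2 : (j.factorial : ℝ) ≠ 0 := by positivity
    have hne3 : (((t+1+j).factorial) : ℝ) ≠ 0 := by positivity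
    have hpow : (-(((t+1:ℕ)):ℝ)*x)^j = (-1)^j * ((t+1:ℕ):ℝ)^j * x^j := by
      rw [show (-(((t+1:ℕ)):ℝ)*x) = (-1) * (((t+1:ℕ)):ℝ) * x by ring, mul_pow, mul_pow]
    rw [hpow]
    field_simp
    rw [← hfact]
    push_cast
    ring

lemma antidiagSum (x : ℝ) (n : ℕ) :
    ∑ p ∈ Finset.HasAntidiagonal.antidiagonal n, cB p.1 * x^p.1 * (-(p.1:ℝ)*x)^p.2 / p.2.factorial
      = if n = 1 then x else 0 := by
  match n with
  | 0 => simp [cB]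
  | 1 =>
    rw [show (Finset.HasAntidiagonal.antidiagonal 1 : Finset (ℕ × ℕ)) = {(0,1),(1,0)} from rfl]
    norm_num [cB]
  | (m+2) =>
    rw [if_neg (by omega)]
    rw [Finset.Nat.sum_antidiagonal_eq_sum_range_succ_mk]
    have step : ∀ k ∈ Finset.range (m+2+1),
        cB k * x^k * (-(k:ℝ)*x)^(m+2-k) / (m+2-k).factorial
          = (x^(m+2) / (m+2).factorial * (-1:ℝ)^(m+2)) * ((-1:ℝ)^k * ((m+2).choose k) * (k:ℝ)^(m+2-1)) := by
      intro k hk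
      have hk' : k ≤ m+2 := Nat.lt_succ_iff.mp (Finset.mem_range.mp hk)
      rw [termEq x (m+2) k (m+2-k) (by omega) (by omega)]
      have hsign : (-1:ℝ)^(m+2-k) = (-1:ℝ)^(m+2) * (-1:ℝ)^k := by
        rw [← pow_add, show (m+2) + k = (m+2-k) + 2*k by omega, pow_add, pow_mul]
        norm_num
      rw [hsign]; ring
    rw [Finset.sum_congr rfl step, ← Finset.mul_sum, altS (m+2) (m+2-1) (by omega), mul_zero]

lemma exp54_lt : Real.exp (1.25:ℝ) < 4 := by
  have h2 : Real.log 4 = 2 * Real.log 2 := by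
    rw [show (4:ℝ) = 2^2 by norm_num, Real.log_pow]; norm_num
  have h3 := Real.log_two_gt_d9
  calc Real.exp (1.25:ℝ) < Real.exp (Real.log 4) := Real.exp_lt_exp.mpr (by rw [h2]; linarith)
    _ = 4 := Real.exp_log (by norm_num)

lemma small_id (x : ℝ) (hx0 : 0 < x) (hx : x ≤ 1/4) :
    ∑' n : ℕ, cB n * (x * Real.exp (-x))^n = x := by
  set F : ℕ × ℕ → ℝ := fun p => cB p.1 * x^p.1 * (-(p.1:ℝ)*x)^p.2 / p.2.factorial with hF
  have hinner_abs : ∀ k : ℕ, ∑' j, |F (k, j)| = cB k * x^k * Real.exp (k*x) := by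
    intro k
    have : ∀ j, |F (k, j)| = cB k * x^k * (((k:ℝ)*x)^j / j.factorial) := by
      intro j
      simp only [hF, abs_div, abs_mul]
      rw [abs_of_nonneg (cB_nonneg k), abs_of_nonneg (pow_nonneg hx0.le k),
        abs_of_nonneg (Nat.cast_nonneg _ : (0:ℝ) ≤ j.factorial)]
      rw [abs_pow, show |(-(k:ℝ)) * x| = (k:ℝ) * x from by
        rw [abs_mul, abs_neg, abs_of_nonneg (Nat.cast_nonneg k : (0:ℝ) ≤ (k:ℕ)), abs_of_nonneg hx0.le]]
      ring
    rw [tsum_congr this, tsum_mul_left, ← real_exp_tsum]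
  have hinner_summable : ∀ k : ℕ, Summable fun j => |F (k, j)| := by
    intro k
    apply Summable.congr ((Real.summable_pow_div_factorial ((k:ℝ)*x)).mul_left (cB k * x^k))
    intro j
    simp only [hF, abs_div, abs_mul]
    rw [abs_of_nonneg (cB_nonneg k), abs_of_nonneg (pow_nonneg hx0.le k),
      abs_of_nonneg (Nat.cast_nonneg _ : (0:ℝ) ≤ j.factorial)]
    rw [abs_pow, show |(-(k:ℝ)) * x| = (k:ℝ) * x from by
      rw [abs_mul, abs_neg, abs_of_nonneg (Nat.cast_nonneg k : (0:ℝ) ≤ (k:ℕ)), abs_of_nonneg hx0.le]]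
    ring
  have houter : Summable fun k => ∑' j, |F (k, j)| := by
    apply Summable.of_nonneg_of_le (fun k => tsum_nonneg (fun j => abs_nonneg _))
      (f := fun k => (x * Real.exp (1 + x))^k)
    · intro k
      rw [hinner_abs k]
      calc cB k * x^k * Real.exp (k*x) ≤ Real.exp 1 ^ k * x^k * Real.exp (k*x) := by
            apply mul_le_mul_of_nonneg_right (mul_le_mul_of_nonneg_right (cB_le k) (by positivity)) (by positivity)
        _ = (x * Real.exp (1 + x))^k := by
            rw [Real.exp_add, mul_pow, mul_pow, Real.exp_nat_mul]
            ring
    · apply summable_geometric_of_lt_one (by positivity)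
      have : Real.exp (1 + x) ≤ Real.exp (1.25 : ℝ) := Real.exp_le_exp.mpr (by linarith)
      nlinarith [Real.exp_pos (1+x), exp54_lt, this]
  have habs : Summable fun p => |F p| :=
    (summable_prod_of_nonneg (fun p => abs_nonneg _)).mpr ⟨fun k => hinner_summable k, houter⟩
  have hsum : Summable F := habs.of_abs
  have step1 : ∑' p : ℕ × ℕ, F p = ∑' n : ℕ, ∑ kl ∈ Finset.HasAntidiagonal.antidiagonal n, F kl := by
    rw [← Finset.HasAntidiagonal.sigmaAntidiagonalEquivProd.tsum_eq F]
    conv_rhs => congr; ext n; rw [← Finset.sum_finset_coe, ← tsum_fintype (L := .unconditional _)]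
    exact Summable.tsum_sigma' (fun n => (hasSum_fintype _).summable)
      (Finset.HasAntidiagonal.sigmaAntidiagonalEquivProd.summable_iff.mpr hsum)
  have step2 : ∑' p : ℕ × ℕ, F p = ∑' k : ℕ, ∑' j : ℕ, F (k, j) := Summable.tsum_prod hsum
  have hinner_eq : ∀ k : ℕ, ∑' j, F (k, j) = cB k * (x * Real.exp (-x))^k := by
    intro k
    have : ∀ j, F (k, j) = (cB k * x^k) * ((-(k:ℝ)*x)^j / j.factorial) := by
      intro j; simp only [hF]; ring
    rw [tsum_congr this, tsum_mul_left, ← real_exp_tsum]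
    rw [mul_pow, ← Real.exp_nat_mul]
    rw [show (k:ℝ) * (-x) = -(k:ℝ)*x by ring]
    ring
  have final : ∑' n : ℕ, ∑ kl ∈ Finset.HasAntidiagonal.antidiagonal n, F kl = x := by
    have : ∀ n : ℕ, ∑ kl ∈ Finset.HasAntidiagonal.antidiagonal n, F kl = if n = 1 then x else 0 :=
      fun n => antidiagSum x n
    rw [tsum_congr this, tsum_ite_eq]
  calc ∑' n : ℕ, cB n * (x * Real.exp (-x))^n
      = ∑' k : ℕ, ∑' j : ℕ, F (k, j) := (tsum_congr hinner_eq).symm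
    _ = ∑' p : ℕ × ℕ, F p := step2.symm
    _ = x := step1.symm ▸ final

lemma gbound (y : ℝ) (hy : y ∈ Set.Ioo (-(1/4):ℝ) 1) : |y * Real.exp (-y)| < Real.exp (-1) := by
  obtain ⟨hy1, hy2⟩ := hy
  rcases le_or_gt 0 y with h0 | h0
  · rw [abs_of_nonneg (by positivity)]
    have hlt : y < Real.exp (y - 1) := by
      have := Real.add_one_lt_exp (show y - 1 ≠ 0 by intro h; rw [sub_eq_zero] at h; exact absurd h (by linarith)) 
      linarith
    calc y * Real.exp (-y) < Real.exp (y-1) * Real.exp (-y) :=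
          mul_lt_mul_of_pos_right hlt (Real.exp_pos _)
      _ = Real.exp (-1) := by rw [← Real.exp_add]; congr 1; ring
  · rw [abs_of_neg (by nlinarith [Real.exp_pos (-y)])]
    have h1 : -y < 1/4 := by linarith
    have h2 : Real.exp (-y) < Real.exp (1/4) := Real.exp_lt_exp.mpr (by linarith)
    have h3 : -(y * Real.exp (-y)) = (-y) * Real.exp (-y) := by ring
    rw [h3]
    have h4 : (-y) * Real.exp (-y) < (1/4) * Real.exp (1/4) := by
      apply mul_lt_mul' h1.le h2 (Real.exp_pos _).le (by norm_num)
    have h5 : (1/4:ℝ) * Real.exp (1/4) < Real.exp (-1) := by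
      have he : Real.exp (1/4) * Real.exp 1 = Real.exp (1.25:ℝ) := by
        rw [← Real.exp_add]; norm_num
      have := exp54_lt
      have hinv : Real.exp (-1) = (Real.exp 1)⁻¹ := by rw [Real.exp_neg]
      rw [hinv, inv_eq_one_div, lt_div_iff₀ (Real.exp_pos 1)]
      nlinarith [exp54_lt, he, Real.exp_pos (1/4:ℝ), Real.exp_pos 1]
    linarith

lemma psum_eq (t : ℝ) : (FormalMultilinearSeries.ofScalars ℝ cB).sum t = ∑' n, cB n * t^n := by
  have : (FormalMultilinearSeries.ofScalars ℝ cB).sum t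
      = FormalMultilinearSeries.ofScalarsSum cB t := rfl
  rw [this, FormalMultilinearSeries.ofScalars_sum_eq]
  simp [smul_eq_mul]

lemma main_id (x : ℝ) (hx : x ∈ Set.Ioo (0:ℝ) 1) :
    ∑' n : ℕ, cB n * (x * Real.exp (-x))^n = x := by
  set p := FormalMultilinearSeries.ofScalars ℝ cB with hp
  have hrad : ((Real.exp (-1)).toNNReal : ENNReal) ≤ p.radius := by
    apply p.le_radius_of_bound 1
    intro n
    have h1 : ‖p n‖ = cB n := by
      rw [hp, FormalMultilinearSeries.ofScalars_norm]
      exact abs_of_nonneg (cB_nonneg n)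
    have h2 : ((Real.exp (-1)).toNNReal : ℝ) = Real.exp (-1) :=
      Real.coe_toNNReal _ (Real.exp_pos _).le
    rw [h1, h2]
    calc cB n * Real.exp (-1) ^ n ≤ Real.exp 1 ^ n * Real.exp (-1) ^ n :=
          mul_le_mul_of_nonneg_right (cB_le n) (by positivity)
      _ = 1 := by rw [← mul_pow, ← Real.exp_add]; norm_num
  have hpos : 0 < p.radius := by
    refine lt_of_lt_of_le ?_ hrad
    simp only [ENNReal.coe_pos, Real.toNNReal_pos]
    exact Real.exp_pos _
  have hball := p.hasFPowerSeriesOnBall hpos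
  have hf : AnalyticOnNhd ℝ p.sum (Metric.eball 0 p.radius) := hball.analyticOnNhd
  set U : Set ℝ := Set.Ioo (-(1/4)) 1 with hU
  have hmem : ∀ y ∈ U, (y * Real.exp (-y)) ∈ Metric.eball (0:ℝ) p.radius := by
    intro y hy
    rw [Metric.mem_eball, edist_zero_right]
    refine lt_of_lt_of_le ?_ hrad
    rw [enorm_eq_nnnorm, ENNReal.coe_lt_coe, ← NNReal.coe_lt_coe, coe_nnnorm, Real.norm_eq_abs,
      Real.coe_toNNReal _ (Real.exp_pos _).le]
    exact gbound y hy
  have hexp : ∀ z : ℝ, AnalyticAt ℝ Real.exp z := by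
    intro z; rw [Real.exp_eq_exp_ℝ]; exact NormedSpace.exp_analytic z
  have hcomp : AnalyticOnNhd ℝ (fun y => p.sum (y * Real.exp (-y))) U := by
    intro y hy
    have hg : AnalyticAt ℝ (fun y : ℝ => y * Real.exp (-y)) y := by
      apply AnalyticAt.mul analyticAt_id
      exact (hexp (-y)).comp (analyticAt_id.neg)
    exact AnalyticAt.comp (f := fun y : ℝ => y * Real.exp (-y)) (hf _ (hmem y hy)) hg
  have hidan : AnalyticOnNhd ℝ (fun y : ℝ => y) U := fun y _ => analyticAt_id
  have hev : (fun y => p.sum (y * Real.exp (-y))) =ᶠ[nhds (1/8:ℝ)] (fun y : ℝ => y) := by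
    apply Filter.eventually_of_mem (IsOpen.mem_nhds isOpen_Ioo
      (by norm_num : (1/8:ℝ) ∈ Set.Ioo (0:ℝ) (1/4)))
    intro y hy
    show p.sum (y * Real.exp (-y)) = y
    rw [hp, psum_eq]
    exact small_id y hy.1 hy.2.le
  have heq := hcomp.eqOn_of_preconnected_of_eventuallyEq hidan isPreconnected_Ioo
    (show (1/8:ℝ) ∈ U by rw [hU]; constructor <;> norm_num) hev
  have hxU : x ∈ U := ⟨by linarith [hx.1], hx.2⟩
  have h := heq hxU
  simp only at h
  rw [hp, psum_eq] at h
  exact h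

lemma summable_cB (t : ℝ) (ht0 : 0 ≤ t) (ht : Real.exp 1 * t < 1) :
    Summable (fun n => cB n * t^n) := by
  apply Summable.of_nonneg_of_le (fun n => mul_nonneg (cB_nonneg n) (pow_nonneg ht0 n))
    (f := fun n => (Real.exp 1 * t)^n)
  · intro n
    rw [mul_pow]
    exact mul_le_mul_of_nonneg_right (cB_le n) (by positivity)
  · exact summable_geometric_of_lt_one (by positivity) ht

lemma phi_mono : StrictMonoOn (fun t : ℝ => t * Real.exp t) (Set.Ici (-1)) := by
  apply strictMonoOn_of_deriv_pos (convex_Ici _) (by fun_prop)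
  intro t ht
  rw [interior_Ici] at ht
  have H : HasDerivAt (fun t : ℝ => t * Real.exp t) (1 * Real.exp t + t * Real.exp t) t :=
    (hasDerivAt_id t).mul (Real.hasDerivAt_exp t)
  rw [H.deriv]
  have h1 : (-1:ℝ) < t := ht
  nlinarith [Real.exp_pos t]

lemma psi_anti : StrictAntiOn (fun t : ℝ => t * Real.exp (-t)) (Set.Ici 1) := by
  apply strictAntiOn_of_deriv_neg (convex_Ici _) (by fun_prop)
  intro t ht
  rw [interior_Ici] at ht
  have He : HasDerivAt (fun t : ℝ => Real.exp (-t)) (Real.exp (-t) * (-1)) t :=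
    (Real.hasDerivAt_exp (-t)).comp t (hasDerivAt_neg t)
  have H : HasDerivAt (fun t : ℝ => t * Real.exp (-t))
      (1 * Real.exp (-t) + t * (Real.exp (-t) * (-1))) t :=
    (hasDerivAt_id t).mul He
  rw [H.deriv]
  have h1 : (1:ℝ) < t := ht
  nlinarith [Real.exp_pos (-t)]

/-- For `m = a μ > 1` and `ζ₀ ∈ (0,1)` solving `ζ₀ = e^{-m(1-ζ₀)}`, the Borel-mass
series satisfies `Σ_{k≥1} e^{-k m}(k m)^{k-1}/k! = -ω(-m e^{-m})/m = ζ₀`, where `ω` is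
the principal Lambert W branch (encoded as any real `w ≥ -1` with
`w e^w = -m e^{-m}`). -/
theorem stmt17 (m ζ₀ : ℝ) (hm : 1 < m) (hz : ζ₀ ∈ Set.Ioo (0:ℝ) 1)
    (hfe : ζ₀ = Real.exp (-m * (1 - ζ₀))) :
    (∑' k : ℕ, Real.exp (-((k+1 : ℕ) * m)) * (((k+1 : ℕ)) * m)^(k : ℕ)
        / (Nat.factorial (k+1))) = ζ₀ ∧
    ∀ w : ℝ, -1 ≤ w → w * Real.exp w = -m * Real.exp (-m) → ζ₀ = -w / m := by
  obtain ⟨hz0, hz1⟩ := hz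
  have hm0 : (0:ℝ) < m := by linarith
  have hkey : (m*ζ₀) * Real.exp (-(m*ζ₀)) = m * Real.exp (-m) := by
    calc (m*ζ₀) * Real.exp (-(m*ζ₀))
        = m * (Real.exp (-m*(1-ζ₀)) * Real.exp (-(m*ζ₀))) := by rw [← hfe]; ring
      _ = m * Real.exp (-m) := by rw [← Real.exp_add]; congr 1; ring
  have hx0 : 0 < m*ζ₀ := by positivity
  have hlt1 : m*ζ₀ < 1 := by
    by_contra h
    push_neg at h
    have h2 : m*ζ₀ < m := by nlinarith
    have h3 := psi_anti (Set.mem_Ici.mpr h) (Set.mem_Ici.mpr (by linarith : (1:ℝ) ≤ m)) h2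
    simp only at h3
    rw [hkey] at h3
    exact lt_irrefl _ h3
  have hid : ∑' n : ℕ, cB n * ((m*ζ₀) * Real.exp (-(m*ζ₀)))^n = m*ζ₀ :=
    main_id _ ⟨hx0, hlt1⟩
  rw [hkey] at hid
  have ht0 : 0 < m * Real.exp (-m) := by positivity
  have hte : Real.exp 1 * (m * Real.exp (-m)) < 1 := by
    have hb := gbound (m*ζ₀) ⟨by linarith, hlt1⟩
    rw [abs_of_pos (by positivity), hkey] at hb
    have : Real.exp 1 * (m * Real.exp (-m)) < Real.exp 1 * Real.exp (-1) :=
      mul_lt_mul_of_pos_left hb (Real.exp_pos 1)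
    rw [← Real.exp_add] at this
    simpa using this
  constructor
  · have hsm := summable_cB (m * Real.exp (-m)) ht0.le hte
    rw [Summable.tsum_eq_zero_add hsm] at hid
    have hc0 : cB 0 * (m * Real.exp (-m))^0 = 0 := by simp [cB]
    rw [hc0, zero_add] at hid
    have hterm : ∀ k : ℕ, Real.exp (-((k+1 : ℕ) * m)) * (((k+1 : ℕ)) * m)^(k : ℕ)
        / (Nat.factorial (k+1)) = (1/m) * (cB (k+1) * (m * Real.exp (-m))^(k+1)) := by
      intro k
      have h1 : cB (k+1) = ((k+1:ℕ):ℝ)^k / (k+1).factorial := by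
        simp [cB]
      have h2 : (m * Real.exp (-m))^(k+1) = m^(k+1) * Real.exp (-(((k+1:ℕ):ℝ) * m)) := by
        rw [mul_pow]
        congr 1
        rw [← Real.exp_nat_mul]
        congr 1
        push_cast
        ring
      rw [h1, h2, show (((k+1:ℕ):ℝ) * m)^k = ((k+1:ℕ):ℝ)^k * m^k from mul_pow _ _ _]
      have hfne : ((k+1).factorial : ℝ) ≠ 0 := by positivity
      field_simp
      ring
    rw [tsum_congr hterm, tsum_mul_left, hid]
    field_simp
  · intro w hw hwe
    have hweq : w * Real.exp w = (-(m*ζ₀)) * Real.exp (-(m*ζ₀)) := by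
      rw [hwe, neg_mul, neg_mul, hkey]
    have hw2 : -(m*ζ₀) ∈ Set.Ici (-1:ℝ) := Set.mem_Ici.mpr (by linarith)
    have : w = -(m*ζ₀) := phi_mono.injOn (Set.mem_Ici.mpr hw) hw2 hweq
    rw [this]
    field_simp
end

section
/- With ζ₀ ∈ (0,1), μ > 0, a > 0 satisfying ζ₀ = e^{-aμ(1-ζ₀)}, the variance of the idle-period distribution ζ₀·δ₀ + μζ₀(1-ζ₀)e^{μ(1-ζ₀)x}·1_{[0,a)}dx equals (1 + ζ₀ - 2aμζ₀)/(μ²(1-ζ₀)). -/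
/-!
With `β = μ(1-ζ₀)`, the idle period is an atom `ζ₀` at `0` plus the density `μζ₀(1-ζ₀)e^{βx}`
on `[0,a)`. The fixed-point equation says exactly `e^{βa} = 1/ζ₀`, which makes the total mass
`ζ₀ + ζ₀(e^{βa} - 1) = 1` and collapses the moments, computed from the antiderivatives of
`x^k e^{βx}`, to `E X = a - 1/μ` and `E X² = a² - 2a/β + 2/(μ²(1-ζ₀))`.
-/

open MeasureTheory Set

theorem integral_exp_const_mul {β : ℝ} (hβ : β ≠ 0) (A : ℝ) :
    ∫ x in (0:ℝ)..A, Real.exp (β * x) = (Real.exp (β * A) - 1) / β := by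
  have hF : ∀ x, HasDerivAt (fun y => Real.exp (β * y) / β) (Real.exp (β * x)) x := fun x => by
    simpa [mul_div_cancel_right₀ _ hβ] using
      (((hasDerivAt_id x).const_mul β).exp).div_const β
  rw [intervalIntegral.integral_eq_sub_of_hasDerivAt (fun x _ => hF x)
    ((by fun_prop : Continuous _).intervalIntegrable _ _), mul_zero, Real.exp_zero, sub_div]

theorem integral_mul_exp_const_mul {β : ℝ} (hβ : β ≠ 0) (A : ℝ) :
    ∫ x in (0:ℝ)..A, x * Real.exp (β * x)
      = A * Real.exp (β * A) / β - (Real.exp (β * A) - 1) / β ^ 2 := by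
  have hF : ∀ x, HasDerivAt (fun y => Real.exp (β * y) * (y / β - 1 / β ^ 2))
      (x * Real.exp (β * x)) x := fun x => by
    refine ((((hasDerivAt_id x).const_mul β).exp).mul
      (((hasDerivAt_id x).div_const β).sub_const (1 / β ^ 2))).congr_deriv ?_
    simp only [id]
    field_simp
    ring
  rw [intervalIntegral.integral_eq_sub_of_hasDerivAt (fun x _ => hF x)
    ((by fun_prop : Continuous _).intervalIntegrable _ _), mul_zero, Real.exp_zero]
  field_simp
  ring

theorem integral_sq_mul_exp_const_mul {β : ℝ} (hβ : β ≠ 0) (A : ℝ) :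
    ∫ x in (0:ℝ)..A, x ^ 2 * Real.exp (β * x)
      = A ^ 2 * Real.exp (β * A) / β - 2 * A * Real.exp (β * A) / β ^ 2
        + 2 * (Real.exp (β * A) - 1) / β ^ 3 := by
  have hF : ∀ x, HasDerivAt (fun y => Real.exp (β * y) * (y ^ 2 / β - 2 * y / β ^ 2 + 2 / β ^ 3))
      (x ^ 2 * Real.exp (β * x)) x := fun x => by
    refine ((((hasDerivAt_id x).const_mul β).exp).mul
      ((((hasDerivAt_pow 2 x).div_const β).sub
        (((hasDerivAt_id x).const_mul 2).div_const (β ^ 2))).add_const (2 / β ^ 3))).congr_deriv ?_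
    simp only [id, Pi.sub_apply]
    field_simp
    ring
  rw [intervalIntegral.integral_eq_sub_of_hasDerivAt (fun x _ => hF x)
    ((by fun_prop : Continuous _).intervalIntegrable _ _), mul_zero, Real.exp_zero]
  field_simp
  ring

theorem setIntegral_Ico_eq_intervalIntegral {E : Type*} [NormedAddCommGroup E] [NormedSpace ℝ E]
    {a b : ℝ} (hab : a ≤ b) (f : ℝ → E) :
    ∫ x in Ico a b, f x = ∫ x in a..b, f x := by
  rw [integral_Ico_eq_integral_Ioo, ← integral_Ioc_eq_integral_Ioo,
    intervalIntegral.integral_of_le hab]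

section AtomPlusDensity

variable {α : Type*} [MeasurableSpace α] {ν : Measure α} {g : α → ℝ}

theorem smul_dirac_add_withDensity_ofReal_univ {p : ℝ} (hp : 0 ≤ p) (x₀ : α)
    (hg : Integrable g ν) (hg0 : 0 ≤ᵐ[ν] g) :
    (ENNReal.ofReal p • Measure.dirac x₀ + ν.withDensity fun x => ENNReal.ofReal (g x)) univ
      = ENNReal.ofReal (p + ∫ x, g x ∂ν) := by
  rw [Measure.add_apply, Measure.smul_apply, withDensity_apply _ MeasurableSet.univ,
    Measure.restrict_univ, ← ofReal_integral_eq_lintegral_ofReal hg hg0,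
    ENNReal.ofReal_add hp (integral_nonneg_of_ae hg0)]
  simp

theorem ae_smul_dirac_add_withDensity {c : ENNReal} {x₀ : α} {f : α → ENNReal} {p : α → Prop}
    (hp : MeasurableSet {x | p x}) (hx₀ : p x₀) (hν : ∀ᵐ x ∂ν, p x) :
    ∀ᵐ x ∂(c • Measure.dirac x₀ + ν.withDensity f), p x := by
  rw [ae_add_measure_iff]
  exact ⟨Measure.ae_smul_measure ((ae_dirac_iff hp).2 hx₀) c,
    (withDensity_absolutelyContinuous ν f).ae_le hν⟩

theorem integral_smul_dirac_add_withDensity_ofReal [MeasurableSingletonClass α]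
    {E : Type*} [NormedAddCommGroup E] [NormedSpace ℝ E] [CompleteSpace E] {p : ℝ} (hp : 0 ≤ p)
    (x₀ : α) (hg : Measurable g) (hg0 : 0 ≤ᵐ[ν] g) {f : α → E}
    (hf : Integrable f
      (ENNReal.ofReal p • Measure.dirac x₀ + ν.withDensity fun x => ENNReal.ofReal (g x))) :
    ∫ x, f x ∂(ENNReal.ofReal p • Measure.dirac x₀ + ν.withDensity fun x => ENNReal.ofReal (g x))
      = p • f x₀ + ∫ x, g x • f x ∂ν := by
  rw [integral_add_measure (integrable_add_measure.mp hf).1 (integrable_add_measure.mp hf).2,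
    integral_smul_measure, integral_dirac, ENNReal.toReal_ofReal hp,
    integral_withDensity_eq_integral_toReal_smul hg.ennreal_ofReal
      (.of_forall fun _ => ENNReal.ofReal_lt_top)]
  congr 1
  refine integral_congr_ae (hg0.mono fun x hx => ?_)
  simp only [ENNReal.toReal_ofReal hx]

end AtomPlusDensity

noncomputable def idlePeriodMeasure (a μ ζ₀ : ℝ) : Measure ℝ :=
  ENNReal.ofReal ζ₀ • Measure.dirac 0 +
    (volume.restrict (Ico 0 a)).withDensity
      fun x => ENNReal.ofReal (μ * ζ₀ * (1 - ζ₀) * Real.exp (μ * (1 - ζ₀) * x))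

section IdlePeriod

variable {a μ ζ₀ : ℝ}

theorem exp_mul_eq_inv_of_eq_exp (hfe : ζ₀ = Real.exp (-(a * μ) * (1 - ζ₀))) :
    Real.exp (μ * (1 - ζ₀) * a) = ζ₀⁻¹ := by
  conv_rhs => rw [hfe, ← Real.exp_neg]
  ring_nf

theorem idlePeriod_density_nonneg (hμ : 0 ≤ μ) (hz : ζ₀ ∈ Icc 0 1) (x : ℝ) :
    0 ≤ μ * ζ₀ * (1 - ζ₀) * Real.exp (μ * (1 - ζ₀) * x) := by
  have := sub_nonneg.2 hz.2
  have := hz.1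
  positivity

theorem integral_idlePeriodMeasure (hμ : 0 ≤ μ) (ha : 0 ≤ a) (hz : ζ₀ ∈ Icc 0 1) {f : ℝ → ℝ}
    (hf : Integrable f (idlePeriodMeasure a μ ζ₀)) :
    ∫ x, f x ∂idlePeriodMeasure a μ ζ₀
      = ζ₀ * f 0 + μ * ζ₀ * (1 - ζ₀) * ∫ x in (0:ℝ)..a, f x * Real.exp (μ * (1 - ζ₀) * x) := by
  rw [idlePeriodMeasure, integral_smul_dirac_add_withDensity_ofReal hz.1 0 (by fun_prop)
    (.of_forall (idlePeriod_density_nonneg hμ hz)) hf, setIntegral_Ico_eq_intervalIntegral ha,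
    ← intervalIntegral.integral_const_mul]
  simp only [smul_eq_mul]
  congr 1
  refine intervalIntegral.integral_congr fun x _ => ?_
  ring

theorem isProbabilityMeasure_idlePeriodMeasure (hμ : 0 < μ) (ha : 0 ≤ a) (hz : ζ₀ ∈ Ioo 0 1)
    (hfe : ζ₀ = Real.exp (-(a * μ) * (1 - ζ₀))) :
    IsProbabilityMeasure (idlePeriodMeasure a μ ζ₀) := by
  have hβ : μ * (1 - ζ₀) ≠ 0 := mul_ne_zero hμ.ne' (sub_ne_zero.2 hz.2.ne')
  have hmass : ∫ x in Ico 0 a, μ * ζ₀ * (1 - ζ₀) * Real.exp (μ * (1 - ζ₀) * x) = 1 - ζ₀ := by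
    rw [setIntegral_Ico_eq_intervalIntegral ha, intervalIntegral.integral_const_mul,
      integral_exp_const_mul hβ, exp_mul_eq_inv_of_eq_exp hfe]
    field_simp [hz.1.ne']
  constructor
  rw [idlePeriodMeasure, smul_dirac_add_withDensity_ofReal_univ hz.1.le 0
    ((by fun_prop : Continuous _).integrableOn_Icc.mono_set Ico_subset_Icc_self)
    (.of_forall (idlePeriod_density_nonneg hμ.le (Ioo_subset_Icc_self hz))), hmass]
  simp

theorem ae_mem_Icc_idlePeriodMeasure (ha : 0 ≤ a) :
    ∀ᵐ x ∂idlePeriodMeasure a μ ζ₀, x ∈ Icc 0 a :=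
  ae_smul_dirac_add_withDensity measurableSet_Icc ⟨le_rfl, ha⟩
    ((ae_restrict_mem measurableSet_Ico).mono fun _ hx => Ico_subset_Icc_self hx)

theorem memLp_id_idlePeriodMeasure [IsFiniteMeasure (idlePeriodMeasure a μ ζ₀)] (ha : 0 ≤ a)
    (p : ENNReal) : MemLp (fun x => x) p (idlePeriodMeasure a μ ζ₀) :=
  .of_bound measurable_id.aestronglyMeasurable a <|
    (ae_mem_Icc_idlePeriodMeasure ha).mono fun x hx => by
      rw [Real.norm_eq_abs, abs_of_nonneg hx.1]
      exact hx.2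

theorem integral_id_idlePeriodMeasure (hμ : 0 < μ) (ha : 0 ≤ a) (hz : ζ₀ ∈ Ioo 0 1)
    (hfe : ζ₀ = Real.exp (-(a * μ) * (1 - ζ₀))) :
    ∫ x, x ∂idlePeriodMeasure a μ ζ₀ = a - μ⁻¹ := by
  have := isProbabilityMeasure_idlePeriodMeasure hμ ha hz hfe
  have h1z : 1 - ζ₀ ≠ 0 := sub_ne_zero.2 hz.2.ne'
  rw [integral_idlePeriodMeasure hμ.le ha (Ioo_subset_Icc_self hz)
    ((memLp_id_idlePeriodMeasure ha 1).integrable le_rfl),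
    integral_mul_exp_const_mul (mul_ne_zero hμ.ne' h1z), exp_mul_eq_inv_of_eq_exp hfe]
  field_simp [hz.1.ne']
  ring

theorem integral_sq_idlePeriodMeasure (hμ : 0 < μ) (ha : 0 ≤ a) (hz : ζ₀ ∈ Ioo 0 1)
    (hfe : ζ₀ = Real.exp (-(a * μ) * (1 - ζ₀))) :
    ∫ x, x ^ 2 ∂idlePeriodMeasure a μ ζ₀
      = a ^ 2 - 2 * a / (μ * (1 - ζ₀)) + 2 / (μ ^ 2 * (1 - ζ₀)) := by
  have := isProbabilityMeasure_idlePeriodMeasure hμ ha hz hfe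
  have h1z : 1 - ζ₀ ≠ 0 := sub_ne_zero.2 hz.2.ne'
  rw [integral_idlePeriodMeasure hμ.le ha (Ioo_subset_Icc_self hz)
    (memLp_id_idlePeriodMeasure ha 2).integrable_sq,
    integral_sq_mul_exp_const_mul (mul_ne_zero hμ.ne' h1z), exp_mul_eq_inv_of_eq_exp hfe]
  field_simp [hz.1.ne']
  ring

end IdlePeriod

/-- With `ζ₀ ∈ (0,1)`, `μ > 0`, `a > 0` satisfying `ζ₀ = exp (-a*μ*(1-ζ₀))`, the
variance of the idle-period distribution
`ζ₀ • δ₀ + (density μ*ζ₀*(1-ζ₀)*exp (μ*(1-ζ₀)*x) on [0,a))` equals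
`(1 + ζ₀ - 2*a*μ*ζ₀) / (μ²*(1-ζ₀))`. -/
theorem stmt19 (a μ ζ₀ : ℝ) (hμ : 0 < μ) (ha : 0 < a)
    (hz : ζ₀ ∈ Set.Ioo (0:ℝ) 1)
    (hfe : ζ₀ = Real.exp (-(a * μ) * (1 - ζ₀))) :
    let P : Measure ℝ :=
      ENNReal.ofReal ζ₀ • Measure.dirac (0:ℝ) +
        (volume.restrict (Ico (0:ℝ) a)).withDensity
          (fun x => ENNReal.ofReal (μ * ζ₀ * (1 - ζ₀) * Real.exp (μ * (1 - ζ₀) * x)))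
    ProbabilityTheory.variance (fun x => x) P
      = (1 + ζ₀ - 2 * a * μ * ζ₀) / (μ^2 * (1 - ζ₀)) := by
  change ProbabilityTheory.variance (fun x => x) (idlePeriodMeasure a μ ζ₀) = _
  have := isProbabilityMeasure_idlePeriodMeasure hμ ha.le hz hfe
  rw [ProbabilityTheory.variance_eq_sub (memLp_id_idlePeriodMeasure ha.le 2)]
  simp only [Pi.pow_apply]
  rw [integral_sq_idlePeriodMeasure hμ ha.le hz hfe,
    integral_id_idlePeriodMeasure hμ ha.le hz hfe]
  field_simp [hμ.ne', sub_ne_zero.2 hz.2.ne']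
  ring
end
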